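/- Cycles are compact: for n ≥ 3, let A be the adjacency matrix of the cycle graph on n vertices (vertices i and j of Fin n adjacent iff they differ by 1 modulo n). Then every doubly stochastic n×n real matrix X satisfying X * A = A * X lies in the convex hull of the set of permutation matrices P_σ where σ ranges over the automorphisms of the cycle graph. -/

import Mathlib

open Matrix Finset

/-- The permutation matrix of `σ`: entry `i j` is `1` if `σ j = i`, else `0`. -/
def permMatrix (n : ℕ) (σ : Equiv.Perm (Fin n)) : Matrix (Fin n) (Fin n) ℝ :=
  fun i j => if σ j = i then 1 else 0

/-- A matrix is doubly stochastic if it has nonnegative entries and all its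
row sums and column sums equal `1`. -/
def IsDoublyStochastic {n : ℕ} (X : Matrix (Fin n) (Fin n) ℝ) : Prop :=
  (∀ i j, 0 ≤ X i j) ∧ (∀ i, ∑ j, X i j = 1) ∧ (∀ j, ∑ i, X i j = 1)

/-- The cycle graph on `n` vertices: `i` and `j` are adjacent iff they differ
by `1` modulo `n`. -/
def cycleGraph (n : ℕ) : SimpleGraph (Fin n) :=
  SimpleGraph.fromRel (fun i j => ((i : ZMod n) + 1 = (j : ZMod n)))

instance (n : ℕ) : DecidableRel (cycleGraph n).Adj := fun i j =>
  inferInstanceAs (Decidable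
    (i ≠ j ∧ (((i : ZMod n) + 1 = (j : ZMod n)) ∨ ((j : ZMod n) + 1 = (i : ZMod n)))))

/-!
Commuting with the adjacency matrix of the cycle says that `X` solves the discrete wave equation
`X i (j - 1) + X i (j + 1) = X (i - 1) j + X (i + 1) j` on `ℤ/n × ℤ/n`. Hence the increment of `X`
along a diagonal is constant along antidiagonals, which forces `X i j = a (i + j) + b (i - j)`.
Choosing `b d` as the minimum of `X` on the `d`-th diagonal makes `a` and `b` nonnegative, and a
column sum gives `∑ a + ∑ b = 1`. Then `X = ∑ a c • P (x ↦ c - x) + ∑ b d • P (x ↦ x + d)` is a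
convex combination of the permutation matrices of the reflections and rotations of the cycle.
-/

open scoped Fin.CommRing

theorem cycleGraph_eq_simpleGraph_cycleGraph (n : ℕ) :
    cycleGraph n = SimpleGraph.cycleGraph n := by
  match n with
  | 0 | 1 => exact Subsingleton.elim _ _
  | n + 2 =>
    ext a b
    have hcast : ∀ x : Fin (n + 2), ((x : ℕ) : ZMod (n + 2)) = x := Fin.cast_val_eq_self
    rw [cycleGraph, SimpleGraph.fromRel_adj, SimpleGraph.cycleGraph_adj, hcast, hcast]
    change a ≠ b ∧ (a + 1 = b ∨ b + 1 = a) ↔ _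
    rw [sub_eq_iff_eq_add', sub_eq_iff_eq_add', eq_comm (a := a), eq_comm (a := b), or_comm,
      and_iff_right_iff_imp]
    rintro (rfl | rfl) <;> simp

theorem cycleGraph_adj_iff {n : ℕ} {u v : Fin (n + 2)} :
    (cycleGraph (n + 2)).Adj u v ↔ u - v = 1 ∨ v - u = 1 := by
  rw [cycleGraph_eq_simpleGraph_cycleGraph, SimpleGraph.cycleGraph_adj]

theorem cycleGraph_neighborFinset {n : ℕ} (v : Fin (n + 2)) :
    (cycleGraph (n + 2)).neighborFinset v = {v - 1, v + 1} := by
  ext u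
  rw [SimpleGraph.mem_neighborFinset, ← SimpleGraph.mem_neighborSet,
    cycleGraph_eq_simpleGraph_cycleGraph, SimpleGraph.cycleGraph_neighborSet]
  simp

theorem cycleGraph_adj_addRight {n : ℕ} (d u v : Fin (n + 2)) :
    (cycleGraph (n + 2)).Adj u v ↔
      (cycleGraph (n + 2)).Adj (Equiv.addRight d u) (Equiv.addRight d v) := by
  simp only [cycleGraph_adj_iff, Equiv.coe_addRight, add_sub_add_right_eq_sub]

theorem cycleGraph_adj_subLeft {n : ℕ} (c u v : Fin (n + 2)) :
    (cycleGraph (n + 2)).Adj u v ↔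
      (cycleGraph (n + 2)).Adj (Equiv.subLeft c u) (Equiv.subLeft c v) := by
  simp only [cycleGraph_adj_iff, Equiv.subLeft_apply, sub_sub_sub_cancel_left, or_comm]

theorem permMatrix_addRight {n : ℕ} [NeZero n] (d i j : Fin n) :
    permMatrix n (Equiv.addRight d) i j = if i - j = d then 1 else 0 := by
  unfold permMatrix
  exact if_congr (by rw [Equiv.coe_addRight, sub_eq_iff_eq_add', eq_comm]) rfl rfl

theorem permMatrix_subLeft {n : ℕ} [NeZero n] (c i j : Fin n) :
    permMatrix n (Equiv.subLeft c) i j = if i + j = c then 1 else 0 := by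
  simp only [permMatrix, Equiv.subLeft_apply, sub_eq_iff_eq_add, @eq_comm _ c]

theorem Fin.sub_one_ne_add_one {n : ℕ} (v : Fin (n + 3)) : v - 1 ≠ v + 1 := by
  intro h
  have h2 : (2 : Fin (n + 3)) = 0 := by linear_combination -h
  simp [Fin.ext_iff, Nat.mod_eq_of_lt (show 2 < n + 3 by omega)] at h2

theorem Fin.apply_eq_apply_of_periodic_one {n : ℕ} [NeZero n] {α : Type*} {f : Fin n → α}
    (hf : Function.Periodic f 1) (x y : Fin n) : f x = f y := by
  simpa using (hf.nat_mul (y - x).val x).symm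

section WaveEquation

variable {n : ℕ} [NeZero n] {X : Matrix (Fin n) (Fin n) ℝ}

theorem diag_step_eq_of_add_eq
    (hW : ∀ i j, X i (j - 1) + X i (j + 1) = X (i - 1) j + X (i + 1) j)
    {i j i' j' : Fin n} (h : i + j = i' + j') :
    X (i + 1) (j + 1) - X i j = X (i' + 1) (j' + 1) - X i' j' := by
  have hper : Function.Periodic (fun k => X (k + 1) (i + j - k + 1) - X k (i + j - k)) 1 := by
    intro k
    dsimp only
    rw [show i + j - (k + 1) + 1 = i + j - k by ring, show i + j - (k + 1) = i + j - k - 1 by ring]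
    have hk := hW (k + 1) (i + j - k)
    rw [add_sub_cancel_right] at hk
    linarith
  have key : X (i + 1) (i + j - i + 1) - X i (i + j - i)
      = X (i' + 1) (i + j - i' + 1) - X i' (i + j - i') :=
    Fin.apply_eq_apply_of_periodic_one hper i i'
  rwa [add_sub_cancel_left, h, add_sub_cancel_left] at key

theorem diag_shift_sub_eq_of_add_eq
    (hW : ∀ i j, X i (j - 1) + X i (j + 1) = X (i - 1) j + X (i + 1) j)
    {i j i' j' : Fin n} (h : i + j = i' + j') (s : Fin n) :
    X (i + s) (j + s) - X i j = X (i' + s) (j' + s) - X i' j' := by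
  have hper : Function.Periodic
      (fun s => X (i + s) (j + s) - X i j - (X (i' + s) (j' + s) - X i' j')) 1 := by
    intro s
    have hstep := diag_step_eq_of_add_eq hW (i := i + s) (j := j + s) (i' := i' + s) (j' := j' + s)
      (by linear_combination h)
    simp only [← add_assoc]
    linarith
  have := Fin.apply_eq_apply_of_periodic_one hper s 0
  simp only [add_zero, sub_self] at this
  linarith

theorem exists_nonneg_eq_add_sub
    (hX : ∀ i j, 0 ≤ X i j) (hW : ∀ i j, X i (j - 1) + X i (j + 1) = X (i - 1) j + X (i + 1) j) :
    ∃ a b : Fin n → ℝ, (∀ c, 0 ≤ a c) ∧ (∀ d, 0 ≤ b d) ∧ ∀ i j, X i j = a (i + j) + b (i - j) := by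
  let b d := univ.inf' univ_nonempty fun j => X (j + d) j
  -- Sliding diagonal `d` by `t` steps along the antidiagonals gives diagonal `d + 2t`, shifted
  -- by a constant: so the minima of the two diagonals differ by the same constant.
  have hdiag : ∀ d t j,
      X (j + d) j = X (j - t + (d + t + t)) (j - t) + (X d 0 - X (d + t) (-t)) := by
    intro d t j
    have h := diag_shift_sub_eq_of_add_eq hW (i := d) (j := 0) (i' := d + t) (j' := -t) (by ring) j
    rw [zero_add] at h
    rw [show j - t + (d + t + t) = d + t + j by ring, show j - t = -t + j by ring, add_comm j d]
    linarith
  have hshift : ∀ d t, b (d + t + t) = b d - (X d 0 - X (d + t) (-t)) := by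
    intro d t
    apply le_antisymm
    · obtain ⟨j, -, hj⟩ := exists_mem_eq_inf' univ_nonempty fun j => X (j + d) j
      have hle := inf'_le (fun j => X (j + (d + t + t)) j) (mem_univ (j - t))
      linarith [hdiag d t j]
    · refine le_inf' _ _ fun j _ => ?_
      have hle := inf'_le (fun j => X (j + d) j) (mem_univ (j + t))
      have hj := hdiag d t (j + t)
      rw [add_sub_cancel_right] at hj
      linarith
  refine ⟨fun c => X c 0 - b c, b, fun c => ?_, fun d => le_inf' _ _ fun j _ => hX _ _, fun i j => ?_⟩
  · simpa using inf'_le (fun j => X (j + c) j) (mem_univ 0)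
  · have h1 := hdiag (i - j) j j
    have h2 := hshift (i - j) j
    simp only [add_sub_cancel, sub_add_cancel, sub_self, zero_add] at h1 h2
    show X i j = X (i + j) 0 - b (i + j) + b (i - j)
    linarith

end WaveEquation

theorem mem_convexHull_permMatrix_of_eq_add_sub {n : ℕ} [NeZero n]
    {S : Set (Matrix (Fin n) (Fin n) ℝ)} (hrefl : ∀ c, permMatrix n (Equiv.subLeft c) ∈ S)
    (hrot : ∀ d, permMatrix n (Equiv.addRight d) ∈ S) {X : Matrix (Fin n) (Fin n) ℝ}
    {a b : Fin n → ℝ} (ha : ∀ c, 0 ≤ a c) (hb : ∀ d, 0 ≤ b d) (hab : ∑ c, a c + ∑ d, b d = 1)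
    (hX : ∀ i j, X i j = a (i + j) + b (i - j)) :
    X ∈ convexHull ℝ S := by
  have hsum : X = ∑ p : Fin n ⊕ Fin n, Sum.elim a b p • Sum.elim
      (fun c => permMatrix n (Equiv.subLeft c)) (fun d => permMatrix n (Equiv.addRight d)) p := by
    ext i j
    simp [Fintype.sum_sum_type, Matrix.sum_apply, permMatrix_subLeft, permMatrix_addRight, hX]
  rw [hsum]
  refine (convex_convexHull ℝ S).sum_mem (fun p _ => ?_) (by simpa [Fintype.sum_sum_type])
    fun p _ => ?_
  · cases p <;> simp [ha, hb]
  · cases p <;> exact subset_convexHull ℝ S (by simp [hrefl, hrot])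

theorem wave_of_commute_adjMatrix_cycleGraph {n : ℕ} {X : Matrix (Fin (n + 3)) (Fin (n + 3)) ℝ}
    (hcomm : X * (cycleGraph (n + 3)).adjMatrix ℝ = (cycleGraph (n + 3)).adjMatrix ℝ * X) (i j) :
    X i (j - 1) + X i (j + 1) = X (i - 1) j + X (i + 1) j := by
  have h := congrFun₂ hcomm i j
  rwa [SimpleGraph.mul_adjMatrix_apply, SimpleGraph.adjMatrix_mul_apply,
    cycleGraph_neighborFinset, cycleGraph_neighborFinset, sum_pair (Fin.sub_one_ne_add_one j),
    sum_pair (Fin.sub_one_ne_add_one i)] at h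

/-- Cycles are compact: for `n ≥ 3`, every doubly stochastic matrix commuting
with the adjacency matrix of the cycle graph lies in the convex hull of the
permutation matrices of its automorphisms. -/
theorem cycleGraph_compact (n : ℕ) (hn : 3 ≤ n) (X : Matrix (Fin n) (Fin n) ℝ)
    (hX : IsDoublyStochastic X)
    (hcomm : X * (cycleGraph n).adjMatrix ℝ = (cycleGraph n).adjMatrix ℝ * X) :
    X ∈ convexHull ℝ {M : Matrix (Fin n) (Fin n) ℝ |
      ∃ σ : Equiv.Perm (Fin n),
        (∀ u v : Fin n, (cycleGraph n).Adj u v ↔ (cycleGraph n).Adj (σ u) (σ v)) ∧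
        M = permMatrix n σ} := by
  obtain ⟨m, rfl⟩ := Nat.exists_eq_add_of_le' hn
  obtain ⟨hX0, -, hcol⟩ := hX
  obtain ⟨a, b, ha, hb, hab⟩ :=
    exists_nonneg_eq_add_sub hX0 (wave_of_commute_adjMatrix_cycleGraph hcomm)
  have hsum : ∑ c, a c + ∑ d, b d = 1 := by
    simpa [hab, sum_add_distrib] using hcol 0
  refine mem_convexHull_permMatrix_of_eq_add_sub ?_ ?_ ha hb hsum hab
  · exact fun c => ⟨_, cycleGraph_adj_subLeft c, rfl⟩
  · exact fun d => ⟨_, cycleGraph_adj_addRight d, rfl⟩
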